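/- Let g, Δ, ε, λ be real numbers, μ := (λ+g²)² − 4g²(λ+g²) − Δ², and set a := −(λ+g²−ε), α := 1 − (λ+g²−ε)/2, β := 4g², γ := ½ − (λ+g²+ε)/2, C := μ + 4εg² − ε², and Λ := β(a/2 + α) + γ(a − ½). Then for every real x > 0 with x ≠ 1 and every twice continuously differentiable f : (0,∞) → ℝ, one has x^{−(a−1/2)/2} · ((ϖ_a(K) − Λ)(t ↦ t^{(a−1/2)/2} f(t)))(x) = x(x−1)·f″(x) + [−4g²·x(x−1) + (1 − (λ+g²) + ε)(x−1) − ((λ+g²) + ε)x]·f′(x) + [4g²(λ+g²−ε)x + μ + 4εg² − ε²]·f(x); the right-hand side is x(x−1) times the confluent Heun operator H₁^ε(λ) applied to f. -/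

import Mathlib

open Real

/-- The first order operator `B : g ↦ −g′ + (½(a−½)x⁻¹ + β)·g`. -/
noncomputable def Bop (a β : ℝ) (g : ℝ → ℝ) : ℝ → ℝ := fun x =>
  -deriv g x + ((1 / 2) * (a - 1 / 2) * x⁻¹ + β) * g x

/-- The first order operator `A : h ↦ x·h′ + ¼·h − x²·h′ − ½(a+½)x·h + α·h`. -/
noncomputable def Aop (a α : ℝ) (h : ℝ → ℝ) : ℝ → ℝ := fun x =>
  x * deriv h x + (1 / 4) * h x - x ^ 2 * deriv h x - (1 / 2) * (a + 1 / 2) * x * h x + α * h x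

/-- The second order operator `ϖ_a(K(α,β,γ;C)) : g ↦ A(Bg) + 2γ·x·g′ + C·g`. -/
noncomputable def piK (a α β γ C : ℝ) (g : ℝ → ℝ) : ℝ → ℝ := fun x =>
  Aop a α (Bop a β g) x + 2 * γ * x * deriv g x + C * g x

/-- The constant `λ_a(α,β,γ) = β(a/2 + α) + γ(a − ½)`. -/
noncomputable def lamConst (a α β γ : ℝ) : ℝ := β * (a / 2 + α) + γ * (a - 1 / 2)

/-!
Conjugation by `x ^ c` with `c = (a - 1/2)/2` is exactly what makes the singular term of `B`
disappear: the derivative of `x ^ c` produces `c x⁻¹ x ^ c`, which cancels `½(a - ½) x⁻¹`, so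
`B (x ^ c f) = x ^ c (β f - f')`. Applying `A` and the remaining first-order terms then gives a
second-order operator with polynomial coefficients, whose constant term at `x = 0` is
`λ_a(α, β, γ) + C`. Subtracting `λ_a` and specialising the parameters yields `x (x - 1) H₁^ε(λ)`.
-/

open Filter Topology

section Conjugation

variable {a β : ℝ} {f : ℝ → ℝ}

theorem hasDerivAt_rpow_mul {c t f' : ℝ} (ht : 0 < t) (hf : HasDerivAt f f' t) :
    HasDerivAt (fun s => s ^ c * f s) (t ^ c * (c * t⁻¹ * f t + f')) t := by
  refine ((hasDerivAt_rpow_const (p := c) (Or.inl ht.ne')).mul hf).congr_deriv ?_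
  rw [rpow_sub_one ht.ne']
  ring

theorem Bop_rpow_mul {t : ℝ} (ht : 0 < t) (hf : DifferentiableAt ℝ f t) :
    Bop a β (fun s => s ^ ((a - 1 / 2) / 2) * f s) t =
      t ^ ((a - 1 / 2) / 2) * (β * f t - deriv f t) := by
  rw [Bop, (hasDerivAt_rpow_mul ht hf.hasDerivAt).deriv]
  field_simp
  ring

theorem deriv_Bop_rpow_mul {x : ℝ} (hx : 0 < x) (hf : ∀ᶠ t in 𝓝 x, DifferentiableAt ℝ f t)
    (hf' : DifferentiableAt ℝ (deriv f) x) :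
    deriv (Bop a β (fun s => s ^ ((a - 1 / 2) / 2) * f s)) x =
      x ^ ((a - 1 / 2) / 2) * ((a - 1 / 2) / 2 * x⁻¹ * (β * f x - deriv f x) +
        (β * deriv f x - deriv (deriv f) x)) := by
  have hB : Bop a β (fun s => s ^ ((a - 1 / 2) / 2) * f s) =ᶠ[𝓝 x]
      fun t => t ^ ((a - 1 / 2) / 2) * (β * f t - deriv f t) := by
    filter_upwards [hf, Ioi_mem_nhds hx] with t hft ht
    exact Bop_rpow_mul ht hft
  have hBf : HasDerivAt (fun t => β * f t - deriv f t)
      (β * deriv f x - deriv (deriv f) x) x :=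
    (hf.self_of_nhds.hasDerivAt.const_mul β).sub hf'.hasDerivAt
  rw [hB.deriv_eq, (hasDerivAt_rpow_mul hx hBf).deriv]

theorem rpow_neg_mul_piK_sub_lamConst (α γ C : ℝ) {x : ℝ} (hx : 0 < x)
    (hf : ∀ᶠ t in 𝓝 x, DifferentiableAt ℝ f t) (hf' : DifferentiableAt ℝ (deriv f) x) :
    x ^ (-(a - 1 / 2) / 2) *
        (piK a α β γ C (fun t => t ^ ((a - 1 / 2) / 2) * f t) x -
          lamConst a α β γ * (x ^ ((a - 1 / 2) / 2) * f x)) =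
      x * (x - 1) * deriv (deriv f) x +
        (-β * (x * (x - 1)) + (a + 2 * γ) * x - (a / 2 + α)) * deriv f x +
        (C - a * β * x) * f x := by
  rw [piK, Aop, deriv_Bop_rpow_mul hx hf hf', Bop_rpow_mul hx hf.self_of_nhds,
    (hasDerivAt_rpow_mul hx hf.self_of_nhds.hasDerivAt).deriv, neg_div, rpow_neg hx.le,
    lamConst]
  field_simp
  ring

end Conjugation

theorem piK_confluentHeun_one_general (g ε lam : ℝ)
    (μ : ℝ)
    (a α β γ C Λ : ℝ)
    (ha : a = -(lam + g ^ 2 - ε))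
    (hα : α = 1 - (lam + g ^ 2 - ε) / 2)
    (hβ : β = 4 * g ^ 2)
    (hγ : γ = 1 / 2 - (lam + g ^ 2 + ε) / 2)
    (hC : C = μ + 4 * ε * g ^ 2 - ε ^ 2)
    (hΛ : Λ = β * (a / 2 + α) + γ * (a - 1 / 2))
    (x : ℝ) (hx : 0 < x)
    (f : ℝ → ℝ) (hf : ContDiffOn ℝ 2 f (Set.Ioi (0 : ℝ))) :
    x ^ (-(a - 1 / 2) / 2) *
        (piK a α β γ C (fun t : ℝ => t ^ ((a - 1 / 2) / 2) * f t) x -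
          Λ * ((fun t : ℝ => t ^ ((a - 1 / 2) / 2) * f t) x)) =
      x * (x - 1) * deriv (deriv f) x +
        (-(4 * g ^ 2) * (x * (x - 1)) + (1 - (lam + g ^ 2) + ε) * (x - 1) -
          ((lam + g ^ 2) + ε) * x) * deriv f x +
        (4 * g ^ 2 * (lam + g ^ 2 - ε) * x + μ + 4 * ε * g ^ 2 - ε ^ 2) * f x := by
  have hf₁ : ∀ᶠ t in 𝓝 x, DifferentiableAt ℝ f t := by
    filter_upwards [Ioi_mem_nhds hx] with t ht
    exact (hf.contDiffAt (Ioi_mem_nhds ht)).differentiableAt two_ne_zero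
  have hf₂ : DifferentiableAt ℝ (deriv f) x :=
    ((hf.deriv_of_isOpen isOpen_Ioi one_add_one_eq_two.le).contDiffAt
      (Ioi_mem_nhds hx)).differentiableAt one_ne_zero
  have hconj := rpow_neg_mul_piK_sub_lamConst α γ C hx hf₁ hf₂ (a := a) (β := β)
  rw [lamConst, ← hΛ] at hconj
  rw [hconj]
  subst ha hα hβ hγ hC
  ring

/-- The confluent Heun picture of `ϖ_a(K) − Λ` for the first choice of parameters:
conjugation by `x^{(a−1/2)/2}` turns it into `x(x−1)` times the confluent Heun operator
`H₁^ε(λ)` of the asymmetric quantum Rabi model. -/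
theorem piK_confluentHeun_one (g Δ ε lam : ℝ)
    (μ : ℝ) (hμ : μ = (lam + g ^ 2) ^ 2 - 4 * g ^ 2 * (lam + g ^ 2) - Δ ^ 2)
    (a α β γ C Λ : ℝ)
    (ha : a = -(lam + g ^ 2 - ε))
    (hα : α = 1 - (lam + g ^ 2 - ε) / 2)
    (hβ : β = 4 * g ^ 2)
    (hγ : γ = 1 / 2 - (lam + g ^ 2 + ε) / 2)
    (hC : C = μ + 4 * ε * g ^ 2 - ε ^ 2)
    (hΛ : Λ = β * (a / 2 + α) + γ * (a - 1 / 2))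
    (x : ℝ) (hx : 0 < x) (hx1 : x ≠ 1)
    (f : ℝ → ℝ) (hf : ContDiffOn ℝ 2 f (Set.Ioi (0 : ℝ))) :
    x ^ (-(a - 1 / 2) / 2) *
        (piK a α β γ C (fun t : ℝ => t ^ ((a - 1 / 2) / 2) * f t) x -
          Λ * ((fun t : ℝ => t ^ ((a - 1 / 2) / 2) * f t) x)) =
      x * (x - 1) * deriv (deriv f) x +
        (-(4 * g ^ 2) * (x * (x - 1)) + (1 - (lam + g ^ 2) + ε) * (x - 1) -
          ((lam + g ^ 2) + ε) * x) * deriv f x +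
        (4 * g ^ 2 * (lam + g ^ 2 - ε) * x + μ + 4 * ε * g ^ 2 - ε ^ 2) * f x :=
  piK_confluentHeun_one_general g ε lam μ a α β γ C Λ ha hα hβ hγ hC hΛ x hx f hf
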